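/- (EDRS early-termination correctness.) Let n ≥ 1 and let r_1, …, r_n be routes with Euclidean distances ED_1 ≤ ED_2 ≤ … ≤ ED_n (sorted nondecreasingly) and graph distances GD_1, …, GD_n satisfying GD_i ≥ ED_i for every i. Suppose for some index j with 1 < j ≤ n the current minimum GD_s := min_{1 ≤ i < j} GD_i satisfies GD_s ≤ ED_j. Then GD_s = min_{1 ≤ i ≤ n} GD_i; that is, the smallest graph distance found among the first j-1 routes is the smallest graph distance among all n routes. -/

import Mathlib

theorem Finset.inf'_eq_inf'_of_subset {ι α : Type*} [SemilatticeInf α] {s t : Finset ι}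
    (hst : s ⊆ t) (hs : s.Nonempty) (f : ι → α) (h : ∀ i ∈ t, i ∉ s → s.inf' hs f ≤ f i) :
    s.inf' hs f = t.inf' (hs.mono hst) f := by
  refine le_antisymm (Finset.le_inf' _ _ fun i hi => ?_) (Finset.inf'_mono f hst hs)
  by_cases his : i ∈ s
  · exact Finset.inf'_le f his
  · exact h i hi his

/-- EDRS early-termination correctness: routes `1, …, n` are sorted by nondecreasing
Euclidean distance `ED`, each graph distance `GD i` dominates `ED i`. If at some
index `1 < j ≤ n` the minimum graph distance `GD_s` among the first `j - 1` routes
satisfies `GD_s ≤ ED j`, then `GD_s` is the minimum graph distance among all `n`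
routes. -/
theorem edrs_early_termination
    (n : ℕ) (ED GD : ℕ → ℝ)
    (hsorted : ∀ i j : ℕ, 1 ≤ i → i ≤ j → j ≤ n → ED i ≤ ED j)
    (hge : ∀ i : ℕ, 1 ≤ i → i ≤ n → ED i ≤ GD i)
    (j : ℕ) (hj1 : 1 < j) (hjn : j ≤ n)
    (hstop : (Finset.Icc 1 (j - 1)).inf' (Finset.nonempty_Icc.mpr (by omega)) GD ≤ ED j) :
    (Finset.Icc 1 (j - 1)).inf' (Finset.nonempty_Icc.mpr (by omega)) GD =
      (Finset.Icc 1 n).inf' (Finset.nonempty_Icc.mpr (by omega)) GD := by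
  refine Finset.inf'_eq_inf'_of_subset (Finset.Icc_subset_Icc le_rfl (by omega)) _ GD
    fun i hi hij => ?_
  rw [Finset.mem_Icc] at hi hij
  obtain ⟨hi1, hin⟩ := hi
  calc _ ≤ ED j := hstop
    _ ≤ ED i := hsorted j i (by omega) (by omega) hin
    _ ≤ GD i := hge i hi1 hin
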